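/- Let P = Q[x_1,...,x_n], σ and τ term orderings, I a nonzero ideal in P, and p, q two primes that are both σ-good for I. If O_τ(I_{(q,σ)}) ≺_τ O_τ(I_{(p,σ)}), then q is τ-bad for I. -/

import Mathlib

open MvPolynomial
open scoped Classical

namespace GB

variable {n : ℕ}

/-- The σ-leading exponent (leading term, as a power-product) of a polynomial;
`0` for the zero polynomial. -/
noncomputable def lexp {K : Type*} [CommSemiring K] (m : MonomialOrder (Fin n))
    (f : MvPolynomial (Fin n) K) : Fin n →₀ ℕ :=
  m.toSyn.symm (f.support.sup fun d => m.toSyn d)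

/-- The σ-leading coefficient. -/
noncomputable def lcoeff {K : Type*} [CommSemiring K] (m : MonomialOrder (Fin n))
    (f : MvPolynomial (Fin n) K) : K :=
  MvPolynomial.coeff (lexp m f) f

/-- The σ-leading monomial (leading coefficient times leading power-product). -/
noncomputable def LM {K : Type*} [CommSemiring K] (m : MonomialOrder (Fin n))
    (f : MvPolynomial (Fin n) K) : MvPolynomial (Fin n) K :=
  monomial (lexp m f) (lcoeff m f)

/-- The leading term ideal `LT_σ(I)` of an ideal, over a field. -/
noncomputable def LTIdeal {K : Type*} [Field K] (m : MonomialOrder (Fin n))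
    (I : Ideal (MvPolynomial (Fin n) K)) : Ideal (MvPolynomial (Fin n) K) :=
  Ideal.span {t | ∃ f ∈ I, f ≠ 0 ∧ t = monomial (lexp m f) (1 : K)}

/-- `G` is a σ-Gröbner basis of `I` (over a field). -/
def IsGB {K : Type*} [Field K] (m : MonomialOrder (Fin n))
    (G : Finset (MvPolynomial (Fin n) K)) (I : Ideal (MvPolynomial (Fin n) K)) : Prop :=
  (0 : MvPolynomial (Fin n) K) ∉ G ∧ (G : Set (MvPolynomial (Fin n) K)) ⊆ I ∧
    Ideal.span (G : Set (MvPolynomial (Fin n) K)) = I ∧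
    ∀ f ∈ I, f ≠ 0 → ∃ g ∈ G, lexp m g ≤ lexp m f

/-- `G` is the reduced σ-Gröbner basis of `I`. -/
def IsReducedGB {K : Type*} [Field K] (m : MonomialOrder (Fin n))
    (G : Finset (MvPolynomial (Fin n) K)) (I : Ideal (MvPolynomial (Fin n) K)) : Prop :=
  IsGB m G I ∧ (∀ g ∈ G, lcoeff m g = 1) ∧
    ∀ g ∈ G, ∀ d ∈ g.support, ∀ g' ∈ G, g' ≠ g → ¬ lexp m g' ≤ d

/-- `G` is a strong σ-Gröbner basis of the ideal `J ⊆ ℤ[x]` it generates. -/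
def IsStrongGB (m : MonomialOrder (Fin n)) (G : Finset (MvPolynomial (Fin n) ℤ))
    (J : Ideal (MvPolynomial (Fin n) ℤ)) : Prop :=
  (0 : MvPolynomial (Fin n) ℤ) ∉ G ∧ Ideal.span (G : Set (MvPolynomial (Fin n) ℤ)) = J ∧
    ∀ f ∈ J, f ≠ 0 → ∃ g ∈ G, LM m g ∣ LM m f

/-- `G` is a minimal strong σ-Gröbner basis of `J`. -/
def IsMinStrongGB (m : MonomialOrder (Fin n)) (G : Finset (MvPolynomial (Fin n) ℤ))
    (J : Ideal (MvPolynomial (Fin n) ℤ)) : Prop :=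
  IsStrongGB m G J ∧ ∀ g ∈ G, ∀ g' ∈ G, g ≠ g' → ¬ LM m g ∣ LM m g'

/-- The denominator of a polynomial with rational coefficients. -/
def den (f : MvPolynomial (Fin n) ℚ) : ℕ :=
  f.support.lcm fun d => (MvPolynomial.coeff d f).den

/-- The denominator of a finite set of polynomials. -/
noncomputable def denF (G : Finset (MvPolynomial (Fin n) ℚ)) : ℕ :=
  G.lcm den

/-- `f` scaled by `den f`, as an integer polynomial. -/
noncomputable def intScale (f : MvPolynomial (Fin n) ℚ) : MvPolynomial (Fin n) ℤ :=
  f.support.sum fun d => monomial d (MvPolynomial.coeff d f * (den f : ℚ)).num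

/-- The primitive integral part of a polynomial with rational coefficients. -/
noncomputable def primQ (f : MvPolynomial (Fin n) ℚ) : MvPolynomial (Fin n) ℤ :=
  (intScale f).support.sum fun d =>
    monomial d (MvPolynomial.coeff d (intScale f) /
      ((intScale f).support.gcd fun e => MvPolynomial.coeff e (intScale f)))

/-- Reduction of a rational number modulo `p` (meaningful when `p ∤ a.den`). -/
noncomputable def redQ (p : ℕ) (a : ℚ) : ZMod p :=
  (a.num : ZMod p) * (a.den : ZMod p)⁻¹

/-- Coefficientwise reduction modulo `p` of a polynomial with rational coefficients
(meaningful when `p` divides no coefficient denominator). -/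
noncomputable def piP (p : ℕ) (f : MvPolynomial (Fin n) ℚ) :
    MvPolynomial (Fin n) (ZMod p) :=
  f.support.sum fun d => monomial d (redQ p (MvPolynomial.coeff d f))

/-- A σ-ordered tuple of (necessarily distinct) power-products. -/
def SOrd (m : MonomialOrder (Fin n)) (L : List (Fin n →₀ ℕ)) : Prop :=
  L.Pairwise fun a b => m.toSyn a < m.toSyn b

/-- `T'` strictly σ-precedes `T`:  either `T` is a proper prefix of `T'`, or at the first
index where they differ (within both lengths) the entry of `T'` is σ-smaller. -/
def Prec (m : MonomialOrder (Fin n)) (T' T : List (Fin n →₀ ℕ)) : Prop :=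
  (T <+: T' ∧ T ≠ T') ∨
    ∃ k, k < T.length ∧ k < T'.length ∧ T.take k = T'.take k ∧
      m.toSyn (T'.getD k 0) < m.toSyn (T.getD k 0)

/-- `T'` σ-precedes or equals `T`. -/
def PrecEq (m : MonomialOrder (Fin n)) (T' T : List (Fin n →₀ ℕ)) : Prop :=
  Prec m T' T ∨ T' = T

/-- The minimal generating set of the monomial ideal `LT_σ(I)`: the set of leading
power-products of nonzero elements of `I` which are minimal w.r.t. divisibility. -/
def minGenSet {K : Type*} [Field K] (m : MonomialOrder (Fin n))
    (I : Ideal (MvPolynomial (Fin n) K)) : Set (Fin n →₀ ℕ) :=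
  {d | (∃ f ∈ I, f ≠ 0 ∧ lexp m f = d) ∧
    ∀ f ∈ I, f ≠ 0 → lexp m f ≤ d → lexp m f = d}

/-- `L` is the tuple `O_σ(I)`: the σ-ordered tuple of the minimal generating set
of `LT_σ(I)`. -/
def IsOsIdeal {K : Type*} [Field K] (m : MonomialOrder (Fin n))
    (I : Ideal (MvPolynomial (Fin n) K)) (L : List (Fin n →₀ ℕ)) : Prop :=
  SOrd m L ∧ ∀ d, d ∈ L ↔ d ∈ minGenSet m I

/-- `L` is the σ-ordered tuple of the interreduction of the set `S` of power-products. -/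
def IsOsSet (m : MonomialOrder (Fin n)) (S : Finset (Fin n →₀ ℕ))
    (L : List (Fin n →₀ ℕ)) : Prop :=
  SOrd m L ∧ ∀ d, d ∈ L ↔ (d ∈ S ∧ ∀ s ∈ S, s ≤ d → s = d)

end GB

/-!
For a prime `r` not dividing the denominators of a monic `σ`-Gröbner basis `G` of `I`, the ideal
`I_(r,σ)` generated by `π_r(G)` is the reduction `π_r(I ∩ ℤ_(r)[x])`: every `r`-integral element of
`I` divides out by the lifts of `G` with zero remainder. If `q` were also `τ`-good, a lift of minimal
`τ`-degree of any element of this reduction keeps its leading coefficient mod `q`, so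
`LT_τ(I_(q,σ)) = LT_τ(I)` and `O_τ(I_(q,σ)) = O_τ(I)`.

On the other hand, for every `σ`-good `p` and every minimal generator `t = LT_τ(g)`, `g ∈ G_τ`,
scaling `g` to be `p`-primitive and reducing it gives an element of `I_(p,σ)` whose leading term `s`
is a term of `g`, so `s ≤_τ t`; some minimal generator `d` of `LT_τ(I_(p,σ))` divides `s`, and since
`G_τ` is reduced, `d` is no minimal generator of `LT_τ(I)` other than `t`. Comparing the sorted
tuples at their first difference, this rules out `O_τ(I) ≺_τ O_τ(I_(p,σ))`.
-/

namespace GB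

open MonomialOrder

variable {n : ℕ}

theorem _root_.MonomialOrder.degree_eq_of_support_subset {σ R S : Type*} [CommSemiring R]
    [CommSemiring S] {m : MonomialOrder σ} {p : MvPolynomial σ R} {q : MvPolynomial σ S}
    (h : p.support ⊆ q.support) (hq : m.degree q ∈ p.support) : m.degree p = m.degree q := by
  apply m.toSyn.injective (le_antisymm _ (m.le_degree hq))
  simpa only [degree, AddEquiv.apply_symm_apply] using Finset.sup_mono h

theorem _root_.MonomialOrder.degree_map_of_injective {σ R S : Type*} [CommSemiring R]
    [CommSemiring S] {m : MonomialOrder σ} {f : R →+* S} (hf : Function.Injective f)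
    (p : MvPolynomial σ R) : m.degree (map f p) = m.degree p := by
  simp only [degree, support_map_of_injective p hf]

theorem _root_.MonomialOrder.leadingCoeff_map_of_injective {σ R S : Type*} [CommSemiring R]
    [CommSemiring S] {m : MonomialOrder σ} {f : R →+* S} (hf : Function.Injective f)
    (p : MvPolynomial σ R) : m.leadingCoeff (map f p) = f (m.leadingCoeff p) := by
  rw [leadingCoeff, degree_map_of_injective hf, coeff_map, leadingCoeff]

theorem lexp_eq_degree {K : Type*} [CommSemiring K] (m : MonomialOrder (Fin n))
    (f : MvPolynomial (Fin n) K) : lexp m f = m.degree f :=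
  rfl

section Reduction

variable (r : ℕ) [hr : Fact r.Prime]

theorem redQ_eq_ratCast (a : ℚ) : redQ r a = a := by
  rw [redQ, Rat.cast_def, div_eq_mul_inv]

def integralAt : Subring ℚ where
  carrier := {a | ¬ r ∣ a.den}
  zero_mem' := by simpa using hr.out.ne_one
  one_mem' := by simpa using hr.out.ne_one
  add_mem' {a b} ha hb hab :=
    (hr.out.dvd_mul.1 (hab.trans (Rat.add_den_dvd a b))).elim ha hb
  mul_mem' {a b} ha hb hab :=
    (hr.out.dvd_mul.1 (hab.trans (Rat.mul_den_dvd a b))).elim ha hb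
  neg_mem' {a} ha := show ¬ r ∣ (-a).den by rwa [Rat.neg_den]

theorem mem_integralAt {a : ℚ} : a ∈ integralAt r ↔ ¬ r ∣ a.den := Iff.rfl

theorem natCast_den_ne_zero {a : ℚ} (ha : a ∈ integralAt r) : (a.den : ZMod r) ≠ 0 := by
  rwa [Ne, ZMod.natCast_eq_zero_iff]

def reduceMod : integralAt r →+* ZMod r where
  toFun a := ((a : ℚ) : ZMod r)
  map_one' := Rat.cast_one
  map_zero' := Rat.cast_zero
  map_add' a b := Rat.cast_add_of_ne_zero (natCast_den_ne_zero r a.2) (natCast_den_ne_zero r b.2)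
  map_mul' a b := Rat.cast_mul_of_ne_zero (natCast_den_ne_zero r a.2) (natCast_den_ne_zero r b.2)

theorem reduceMod_surjective : Function.Surjective (reduceMod r) := fun c =>
  ⟨⟨(c.val : ℚ), by rw [mem_integralAt, Rat.den_natCast]; exact hr.out.not_dvd_one⟩, by
    change ((c.val : ℚ) : ZMod r) = c
    rw [Rat.cast_natCast, ZMod.natCast_zmod_val]⟩

theorem mem_integralAt_of_padicValRat_nonneg {a : ℚ} (ha : 0 ≤ padicValRat r a) : a ∈ integralAt r := by
  intro hden
  have hnum : ¬ (r : ℤ) ∣ a.num := fun hnum =>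
    hr.out.ne_one (Nat.eq_one_of_dvd_coprimes a.reduced (Int.natCast_dvd.1 hnum) hden)
  have := one_le_padicValNat_of_dvd a.den_nz hden
  rw [padicValRat_def, padicValInt.eq_zero_of_not_dvd hnum] at ha
  omega

theorem ratCast_ne_zero_of_padicValRat_eq_zero {a : ℚ} (ha0 : a ≠ 0)
    (ha : padicValRat r a = 0) : (a : ZMod r) ≠ 0 := by
  have hden := mem_integralAt_of_padicValRat_nonneg r ha.ge
  have hnum : ¬ (r : ℤ) ∣ a.num := by
    rw [← pow_one (r : ℤ), padicValInt_dvd_iff]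
    rw [padicValRat_def, padicValNat.eq_zero_of_not_dvd hden] at ha
    simp only [Rat.num_eq_zero, ha0, false_or, not_le]
    omega
  rw [Rat.cast_def]
  exact div_ne_zero (by rwa [Ne, ZMod.intCast_zmod_eq_zero_iff_dvd])
    (natCast_den_ne_zero r hden)

end Reduction

section Lift

variable (r : ℕ) [hr : Fact r.Prime]

theorem coeff_piP (f : MvPolynomial (Fin n) ℚ) (d : Fin n →₀ ℕ) :
    (piP r f).coeff d = ((f.coeff d : ℚ) : ZMod r) := by
  rw [piP, coeff_sum, Finset.sum_eq_single d (fun b _ hb => by simp [coeff_monomial, hb])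
    (fun hd => by simp [notMem_support_iff.1 hd, redQ]), coeff_monomial, if_pos rfl,
    redQ_eq_ratCast]

theorem support_piP_subset (f : MvPolynomial (Fin n) ℚ) : (piP r f).support ⊆ f.support :=
  fun d hd => by
    rw [mem_support_iff, coeff_piP] at hd
    exact mem_support_iff.2 fun h0 => hd (by rw [h0, Rat.cast_zero])

theorem piP_map_subtype (F : MvPolynomial (Fin n) (integralAt r)) :
    piP r (map (integralAt r).subtype F) = map (reduceMod r) F := by
  ext d
  rw [coeff_piP, coeff_map, coeff_map]
  rfl

theorem map_subtype_injective :
    Function.Injective (map (σ := Fin n) (integralAt r).subtype) :=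
  map_injective _ (integralAt r).subtype_injective

theorem lexp_map_subtype (m : MonomialOrder (Fin n)) (F : MvPolynomial (Fin n) (integralAt r)) :
    lexp m (map (integralAt r).subtype F) = m.degree F :=
  degree_map_of_injective (integralAt r).subtype_injective F

theorem exists_map_subtype_eq {f : MvPolynomial (Fin n) ℚ} (hf : ∀ d, f.coeff d ∈ integralAt r) :
    ∃ F, map (integralAt r).subtype F = f := by
  refine mem_range_map_iff_coeffs_subset.2 fun a ha => ?_
  obtain ⟨d, -, rfl⟩ := mem_coeffs_iff.1 ha
  exact ⟨⟨_, hf d⟩, rfl⟩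

theorem coeff_mem_integralAt_of_not_dvd_denF {G : Finset (MvPolynomial (Fin n) ℚ)}
    (hG : ¬ r ∣ denF G) {g : MvPolynomial (Fin n) ℚ} (hg : g ∈ G) (d : Fin n →₀ ℕ) :
    g.coeff d ∈ integralAt r := by
  by_cases hd : d ∈ g.support
  · have hden : (g.coeff d).den ∣ den g := Finset.dvd_lcm hd
    exact fun h => hG (h.trans (hden.trans (Finset.dvd_lcm hg)))
  · rw [notMem_support_iff.1 hd]
    exact zero_mem _

theorem exists_C_mul_map_subtype_eq {g : MvPolynomial (Fin n) ℚ} (hg : g ≠ 0) :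
    ∃ c : ℚ, ∃ F, map (integralAt r).subtype F = C c * g ∧ map (reduceMod r) F ≠ 0 := by
  obtain ⟨d₀, hd₀, hmin⟩ := g.support.exists_min_image (fun d => padicValRat r (g.coeff d))
    (support_nonempty.2 hg)
  set c : ℚ := (r : ℚ) ^ (-padicValRat r (g.coeff d₀))
  have hc : c ≠ 0 := zpow_ne_zero _ (Nat.cast_ne_zero.2 hr.out.ne_zero)
  have hval : ∀ d ∈ g.support, padicValRat r ((C c * g).coeff d) =
      padicValRat r (g.coeff d) - padicValRat r (g.coeff d₀) := fun d hd => by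
    rw [coeff_C_mul, padicValRat.mul hc (mem_support_iff.1 hd), padicValRat.zpow,
      padicValRat.self hr.out.one_lt]
    ring
  obtain ⟨F, hF⟩ := exists_map_subtype_eq r (f := C c * g) fun d => by
    by_cases hd : d ∈ g.support
    · exact mem_integralAt_of_padicValRat_nonneg r (by linarith [hval d hd, hmin d hd])
    · rw [coeff_C_mul, notMem_support_iff.1 hd, mul_zero]
      exact zero_mem _
  have hcg : (C c * g).coeff d₀ ≠ 0 := by
    rw [coeff_C_mul]
    exact mul_ne_zero hc (mem_support_iff.1 hd₀)
  refine ⟨c, F, hF, fun h0 => ratCast_ne_zero_of_padicValRat_eq_zero r hcg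
    (by rw [hval d₀ hd₀, sub_self]) ?_⟩
  rw [← coeff_piP, ← hF, piP_map_subtype, h0, coeff_zero]

end Lift

section ReductionIdeal

variable (r : ℕ) [Fact r.Prime]

noncomputable def reduction (I : Ideal (MvPolynomial (Fin n) ℚ)) :
    Ideal (MvPolynomial (Fin n) (ZMod r)) :=
  (I.comap (map (integralAt r).subtype)).map (map (reduceMod r))

variable {r} {I : Ideal (MvPolynomial (Fin n) ℚ)}

theorem mem_reduction {h : MvPolynomial (Fin n) (ZMod r)} :
    h ∈ reduction r I ↔ ∃ F, map (integralAt r).subtype F ∈ I ∧ map (reduceMod r) F = h :=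
  Ideal.mem_map_iff_of_surjective _ (map_surjective _ (reduceMod_surjective r))

theorem piP_mem_reduction {g : MvPolynomial (Fin n) ℚ} (hg : g ∈ I)
    (hint : ∀ d, g.coeff d ∈ integralAt r) : piP r g ∈ reduction r I := by
  obtain ⟨F, rfl⟩ := exists_map_subtype_eq r hint
  exact mem_reduction.2 ⟨F, hg, (piP_map_subtype r F).symm⟩

theorem exists_mem_reduction_lexp_mem_support (m : MonomialOrder (Fin n))
    {g : MvPolynomial (Fin n) ℚ} (hg : g ∈ I) (hg0 : g ≠ 0) :
    ∃ h ∈ reduction r I, h ≠ 0 ∧ lexp m h ∈ g.support := by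
  obtain ⟨c, F, hF, hF0⟩ := exists_C_mul_map_subtype_eq r hg0
  refine ⟨_, mem_reduction.2 ⟨F, hF ▸ I.mul_mem_left _ hg, rfl⟩, hF0, ?_⟩
  rw [← piP_map_subtype, hF] at hF0 ⊢
  have hmem := support_piP_subset r _ (degree_mem_support (m := m) hF0)
  rw [mem_support_iff, coeff_C_mul] at hmem
  exact mem_support_iff.2 (right_ne_zero_of_mul hmem)

theorem lexp_piP_of_lcoeff_eq_one {m : MonomialOrder (Fin n)} {g : MvPolynomial (Fin n) ℚ}
    (hg : lcoeff m g = 1) : piP r g ≠ 0 ∧ lexp m (piP r g) = lexp m g := by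
  have hmem : lexp m g ∈ (piP r g).support := by
    rw [mem_support_iff, coeff_piP]
    exact (congrArg (fun a : ℚ => (a : ZMod r)) hg).trans_ne (by simp)
  exact ⟨fun h0 => by simp [h0] at hmem, degree_eq_of_support_subset (support_piP_subset r g) hmem⟩

variable {m : MonomialOrder (Fin n)} {G : Finset (MvPolynomial (Fin n) ℚ)}

theorem leadingCoeff_eq_one_of_map_subtype_mem (hmonic : ∀ g ∈ G, lcoeff m g = 1)
    {b : MvPolynomial (Fin n) (integralAt r)} (hb : map (integralAt r).subtype b ∈ G) :
    m.leadingCoeff b = 1 := by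
  apply (integralAt r).subtype_injective
  rw [← leadingCoeff_map_of_injective (integralAt r).subtype_injective, map_one]
  exact hmonic _ hb

theorem span_piP_le_reduction (hGI : (G : Set (MvPolynomial (Fin n) ℚ)) ⊆ I)
    (hden : ¬ r ∣ denF G) : Ideal.span (piP r '' G) ≤ reduction r I :=
  Ideal.span_le.2 <| by
    rintro _ ⟨g, hg, rfl⟩
    exact piP_mem_reduction (hGI hg) (coeff_mem_integralAt_of_not_dvd_denF r hden hg)

/-- Dividing a lift by the lifts of `G` leaves no remainder, since `G` is a Gröbner basis. -/
theorem reduction_le_span_piP (hG : IsGB m G I) (hmonic : ∀ g ∈ G, lcoeff m g = 1)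
    (hden : ¬ r ∣ denF G) : reduction r I ≤ Ideal.span (piP r '' G) := by
  intro h hh
  obtain ⟨F, hF, rfl⟩ := mem_reduction.1 hh
  set B : Set (MvPolynomial (Fin n) (integralAt r)) := {b | map (integralAt r).subtype b ∈ G}
  obtain ⟨c, R, hFR, -, hR⟩ := m.div_set (B := B) (fun b hb => by
    rw [leadingCoeff_eq_one_of_map_subtype_mem hmonic hb]; exact isUnit_one) F
  have hspan : F - R ∈ Ideal.span B := by
    rw [hFR, add_sub_cancel_right]
    have := LinearMap.mem_range_self (Finsupp.linearCombination _ (Subtype.val : B → _)) c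
    rwa [Finsupp.range_linearCombination, Subtype.range_coe] at this
  have hR0 : R = 0 := by
    by_contra hR0
    have hRI : map (integralAt r).subtype R ∈ I := by
      have hmap := Ideal.mem_map_of_mem (map (integralAt r).subtype) hspan
      rw [Ideal.map_span] at hmap
      have := sub_mem hF (Ideal.span_le.2 (by rintro _ ⟨b, hb, rfl⟩; exact hG.2.1 hb) hmap)
      rwa [← map_sub, sub_sub_cancel] at this
    obtain ⟨g, hg, hle⟩ := hG.2.2.2 _ hRI ((map_ne_zero_iff _ (map_subtype_injective r)).2 hR0)
    obtain ⟨b, rfl⟩ := exists_map_subtype_eq r (coeff_mem_integralAt_of_not_dvd_denF r hden hg)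
    rw [lexp_map_subtype, lexp_map_subtype] at hle
    exact hR _ (degree_mem_support hR0) b hg hle
  rw [hR0, sub_zero] at hspan
  have hmap := Ideal.mem_map_of_mem (map (reduceMod r)) hspan
  rw [Ideal.map_span] at hmap
  refine Ideal.span_mono ?_ hmap
  rintro _ ⟨b, hb, rfl⟩
  exact ⟨_, hb, piP_map_subtype r b⟩

theorem span_piP_eq_reduction (hG : IsGB m G I) (hmonic : ∀ g ∈ G, lcoeff m g = 1)
    (hden : ¬ r ∣ denF G) : Ideal.span (piP r '' G) = reduction r I :=
  le_antisymm (span_piP_le_reduction hG.2.1 hden) (reduction_le_span_piP hG hmonic hden)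

/-- A lift whose leading coefficient vanishes mod `r` can be reduced by a lift of an element
of `G` without changing its image mod `r`; this terminates since the degree drops. -/
theorem exists_lift_reduceMod_leadingCoeff_ne_zero (hG : IsGB m G I)
    (hmonic : ∀ g ∈ G, lcoeff m g = 1) (hden : ¬ r ∣ denF G)
    {F : MvPolynomial (Fin n) (integralAt r)} (hF : map (integralAt r).subtype F ∈ I)
    (hF0 : map (reduceMod r) F ≠ 0) :
    ∃ F', map (integralAt r).subtype F' ∈ I ∧ map (reduceMod r) F' = map (reduceMod r) F ∧
      reduceMod r (m.leadingCoeff F') ≠ 0 := by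
  induction hd : m.toSyn (m.degree F) using WellFoundedLT.induction generalizing F with
  | ind d ih =>
  by_cases hlc : reduceMod r (m.leadingCoeff F) ≠ 0
  · exact ⟨F, hF, rfl, hlc⟩
  rw [not_not] at hlc
  have hdeg : m.degree F ≠ 0 := fun h0 => hF0 (by
    rw [eq_C_of_degree_eq_zero h0, map_C, hlc, C_0])
  obtain ⟨g, hg, hle⟩ := hG.2.2.2 _ hF
    ((map_ne_zero_iff _ (map_subtype_injective r)).2 (by rintro rfl; exact hF0 (map_zero _)))
  obtain ⟨b, rfl⟩ := exists_map_subtype_eq r (coeff_mem_integralAt_of_not_dvd_denF r hden hg)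
  have hb : IsUnit (m.leadingCoeff b) := by
    rw [leadingCoeff_eq_one_of_map_subtype_mem hmonic hg]; exact isUnit_one
  rw [lexp_map_subtype, lexp_map_subtype] at hle
  have hred : map (reduceMod r) (m.reduce hb F) = map (reduceMod r) F := by
    simp only [reduce, map_sub, map_mul, map_monomial, hlc, mul_zero, monomial_zero, zero_mul,
      sub_zero]
  have hredI : map (integralAt r).subtype (m.reduce hb F) ∈ I := by
    simp only [reduce, map_sub, map_mul]
    exact sub_mem hF (I.mul_mem_left _ (hG.2.1 hg))
  obtain ⟨F', hF'I, hF'F, hF'lc⟩ :=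
    ih _ (hd ▸ degree_reduce_lt hb hle hdeg) hredI (hred ▸ hF0) rfl
  exact ⟨F', hF'I, hF'F.trans hred, hF'lc⟩

theorem exists_lexp_le_of_mem_reduction (hG : IsGB m G I) (hmonic : ∀ g ∈ G, lcoeff m g = 1)
    (hden : ¬ r ∣ denF G) {h : MvPolynomial (Fin n) (ZMod r)} (hh : h ∈ reduction r I)
    (h0 : h ≠ 0) : ∃ g ∈ G, lexp m g ≤ lexp m h := by
  obtain ⟨F, hF, rfl⟩ := mem_reduction.1 hh
  obtain ⟨F', hF'I, hF'F, hlc⟩ := exists_lift_reduceMod_leadingCoeff_ne_zero hG hmonic hden hF h0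
  obtain ⟨g, hg, hle⟩ := hG.2.2.2 _ hF'I ((map_ne_zero_iff _ (map_subtype_injective r)).2
    (by rintro rfl; exact hlc (by rw [leadingCoeff_zero, map_zero])))
  refine ⟨g, hg, ?_⟩
  rwa [← hF'F, lexp_eq_degree m (map _ F'), degree_eq_of_support_subset (support_map_subset _ _)
    (by rwa [mem_support_iff, coeff_map]), ← lexp_map_subtype]

end ReductionIdeal

section LeadingExponents

variable {K : Type*} [Field K] {m : MonomialOrder (Fin n)}

def lexps (m : MonomialOrder (Fin n)) (J : Ideal (MvPolynomial (Fin n) K)) :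
    Set (Fin n →₀ ℕ) :=
  {d | ∃ f ∈ J, f ≠ 0 ∧ lexp m f = d}

theorem mem_lexps_of_le {J : Ideal (MvPolynomial (Fin n) K)} {d e : Fin n →₀ ℕ}
    (hd : d ∈ lexps m J) (hde : d ≤ e) : e ∈ lexps m J := by
  obtain ⟨f, hf, hf0, rfl⟩ := hd
  have hmon : monomial (e - lexp m f) (1 : K) ≠ 0 := by simp
  refine ⟨monomial (e - lexp m f) 1 * f, J.mul_mem_left _ hf, mul_ne_zero hmon hf0, ?_⟩
  rw [lexp_eq_degree, degree_mul hmon hf0, degree_monomial, if_neg one_ne_zero,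
    ← lexp_eq_degree, tsub_add_cancel_of_le hde]

theorem lexps_eq_of_isGB {J : Ideal (MvPolynomial (Fin n) K)}
    {G : Finset (MvPolynomial (Fin n) K)} (hG : IsGB m G J) :
    lexps m J = {d | ∃ g ∈ G, lexp m g ≤ d} := by
  ext d
  constructor
  · rintro ⟨f, hf, hf0, rfl⟩
    exact hG.2.2.2 f hf hf0
  · rintro ⟨g, hg, hle⟩
    exact mem_lexps_of_le ⟨g, hG.2.1 hg, ne_of_mem_of_not_mem hg hG.1, rfl⟩ hle

theorem minGenSet_eq_minimal (J : Ideal (MvPolynomial (Fin n) K)) :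
    minGenSet m J = {d | Minimal (· ∈ lexps m J) d} := by
  ext d
  refine ⟨fun ⟨hd, hmin⟩ => ⟨by simpa [lexps] using hd, ?_⟩,
    fun ⟨hd, hmin⟩ => ⟨by simpa [lexps] using hd, ?_⟩⟩
  · rintro _ ⟨f, hf, hf0, rfl⟩ hle
    exact (hmin f hf hf0 hle).ge
  · intro f hf hf0 hle
    exact le_antisymm hle (hmin ⟨f, hf, hf0, rfl⟩ hle)

theorem exists_lexp_eq_of_mem_minGenSet {J : Ideal (MvPolynomial (Fin n) K)}
    {G : Finset (MvPolynomial (Fin n) K)} (hG : IsGB m G J) {t : Fin n →₀ ℕ}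
    (ht : t ∈ minGenSet m J) : ∃ g ∈ G, lexp m g = t := by
  obtain ⟨⟨f, hf, hf0, rfl⟩, hmin⟩ := ht
  obtain ⟨g, hg, hle⟩ := hG.2.2.2 f hf hf0
  exact ⟨g, hg, hmin g (hG.2.1 hg) (ne_of_mem_of_not_mem hg hG.1) hle⟩

end LeadingExponents

theorem minGenSet_reduction_eq {r : ℕ} [Fact r.Prime] {m : MonomialOrder (Fin n)}
    {I : Ideal (MvPolynomial (Fin n) ℚ)} {G : Finset (MvPolynomial (Fin n) ℚ)}
    (hG : IsGB m G I) (hmonic : ∀ g ∈ G, lcoeff m g = 1) (hden : ¬ r ∣ denF G) :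
    minGenSet m (reduction r I) = minGenSet m I := by
  suffices lexps m (reduction r I) = lexps m I by
    rw [minGenSet_eq_minimal, minGenSet_eq_minimal, this]
  rw [lexps_eq_of_isGB hG]
  ext d
  constructor
  · rintro ⟨h, hh, h0, rfl⟩
    exact exists_lexp_le_of_mem_reduction hG hmonic hden hh h0
  · rintro ⟨g, hg, hle⟩
    obtain ⟨hne, hlexp⟩ := lexp_piP_of_lcoeff_eq_one (r := r) (hmonic g hg)
    exact mem_lexps_of_le ⟨_, piP_mem_reduction (hG.2.1 hg)
      (coeff_mem_integralAt_of_not_dvd_denF r hden hg), hne, hlexp⟩ hle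

/-- `d` divides a term of `g` where `t = lexp g`, and since `G` is reduced no other leading
exponent of `G` divides a term of `g`. -/
theorem exists_mem_minGenSet_reduction_le {r : ℕ} [Fact r.Prime] {m : MonomialOrder (Fin n)}
    {I : Ideal (MvPolynomial (Fin n) ℚ)} {G : Finset (MvPolynomial (Fin n) ℚ)}
    (hG : IsReducedGB m G I) {t : Fin n →₀ ℕ} (ht : t ∈ minGenSet m I) :
    ∃ d ∈ minGenSet m (reduction r I), m.toSyn d ≤ m.toSyn t ∧ (d ∈ minGenSet m I → d = t) := by
  obtain ⟨hGB, -, hred⟩ := hG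
  obtain ⟨g, hg, rfl⟩ := exists_lexp_eq_of_mem_minGenSet hGB ht
  obtain ⟨h, hh, h0, hsupp⟩ :=
    exists_mem_reduction_lexp_mem_support (r := r) m (hGB.2.1 hg) (ne_of_mem_of_not_mem hg hGB.1)
  obtain ⟨d, hds, hdmin⟩ :=
    exists_minimal_le_of_wellFoundedLT (· ∈ lexps m (reduction r I)) _ ⟨h, hh, h0, rfl⟩
  refine ⟨d, (minGenSet_eq_minimal (reduction r I)).symm ▸ hdmin,
    (m.toSyn_monotone hds).trans (m.le_degree hsupp), fun hdI => ?_⟩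
  obtain ⟨g', hg', rfl⟩ := exists_lexp_eq_of_mem_minGenSet hGB hdI
  by_contra hne
  exact hred g hg _ hsupp g' hg' (fun e => hne (e ▸ rfl)) hds

theorem not_prec_of_forall_exists_le {m : MonomialOrder (Fin n)} {T T' : List (Fin n →₀ ℕ)}
    (hT : SOrd m T) (hT' : SOrd m T')
    (h : ∀ t ∈ T', ∃ d ∈ T, m.toSyn d ≤ m.toSyn t ∧ (d ∈ T' → d = t)) : ¬ Prec m T' T := by
  have hnodup : T'.Nodup := hT'.imp (fun hlt heq => (heq ▸ hlt).false)
  rintro (⟨⟨u, rfl⟩, hne⟩ | ⟨k, hk, hk', htake, hlt⟩)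
  · obtain ⟨t, u, rfl⟩ := List.exists_cons_of_ne_nil (show u ≠ [] by rintro rfl; simp at hne)
    obtain ⟨d, hd, -, hdt⟩ := h t (by simp)
    rw [hdt (by simp [hd])] at hd
    exact List.disjoint_of_nodup_append hnodup hd (by simp)
  · obtain ⟨d, hd, hdt, hdT'⟩ := h T'[k] (List.getElem_mem hk')
    obtain ⟨j, hj, rfl⟩ := List.getElem_of_mem hd
    rw [List.getD_eq_getElem _ _ hk, List.getD_eq_getElem _ _ hk'] at hlt
    rcases lt_or_ge j k with hjk | hkj
    · have hTj : T[j] = T'[j] := by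
        have := List.getElem_of_eq htake (i := j) (by simpa using ⟨hjk, hj⟩)
        rwa [List.getElem_take, List.getElem_take] at this
      have := hnodup.getElem_inj_iff.1 (hTj.symm.trans (hdT' (hTj ▸ List.getElem_mem _)))
      omega
    · refine (hdt.trans_lt hlt).not_ge ?_
      rcases hkj.eq_or_lt with rfl | hkj
      · exact le_rfl
      · exact (List.pairwise_iff_getElem.1 hT k j hk hj hkj).le

end GB

theorem stmt18_general {n : ℕ} (mσ mτ : MonomialOrder (Fin n))
    (I : Ideal (MvPolynomial (Fin n) ℚ))
    (Gσ Gτ : Finset (MvPolynomial (Fin n) ℚ))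
    (hGσ : GB.IsReducedGB mσ Gσ I) (hGτ : GB.IsReducedGB mτ Gτ I)
    (p q : ℕ) [Fact p.Prime] [Fact q.Prime]
    (hpσ : ¬ p ∣ GB.denF Gσ) (hqσ : ¬ q ∣ GB.denF Gσ)
    (Lp Lq : List (Fin n →₀ ℕ))
    (hLp : GB.IsOsIdeal mτ
      (Ideal.span ((Gσ.image (GB.piP p) : Finset (MvPolynomial (Fin n) (ZMod p))) :
        Set (MvPolynomial (Fin n) (ZMod p)))) Lp)
    (hLq : GB.IsOsIdeal mτ
      (Ideal.span ((Gσ.image (GB.piP q) : Finset (MvPolynomial (Fin n) (ZMod q))) :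
        Set (MvPolynomial (Fin n) (ZMod q)))) Lq)
    (hprec : GB.Prec mτ Lq Lp) :
    q ∣ GB.denF Gτ := by
  by_contra hqτ
  obtain ⟨hGσ, hmonicσ, -⟩ := hGσ
  rw [Finset.coe_image, GB.span_piP_eq_reduction hGσ hmonicσ hpσ] at hLp
  rw [Finset.coe_image, GB.span_piP_eq_reduction hGσ hmonicσ hqσ, GB.IsOsIdeal,
    GB.minGenSet_reduction_eq hGτ.1 hGτ.2.1 hqτ] at hLq
  refine GB.not_prec_of_forall_exists_le hLp.1 hLq.1 (fun t ht => ?_) hprec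
  obtain ⟨d, hd, hdt, hdI⟩ := GB.exists_mem_minGenSet_reduction_le (r := p) hGτ ((hLq.2 t).1 ht)
  exact ⟨d, (hLp.2 d).2 hd, hdt, fun hdq => hdI ((hLq.2 d).1 hdq)⟩

/-- if `p, q` are σ-good for `I` and
`O_τ(I_{(q,σ)}) ≺_τ O_τ(I_{(p,σ)})` then `q` is τ-bad for `I`. -/
theorem stmt18 {n : ℕ} (mσ mτ : MonomialOrder (Fin n))
    (I : Ideal (MvPolynomial (Fin n) ℚ)) (hI : I ≠ ⊥)
    (Gσ Gτ : Finset (MvPolynomial (Fin n) ℚ))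
    (hGσ : GB.IsReducedGB mσ Gσ I) (hGτ : GB.IsReducedGB mτ Gτ I)
    (p q : ℕ) [Fact p.Prime] [Fact q.Prime]
    (hpσ : ¬ p ∣ GB.denF Gσ) (hqσ : ¬ q ∣ GB.denF Gσ)
    (Lp Lq : List (Fin n →₀ ℕ))
    (hLp : GB.IsOsIdeal mτ
      (Ideal.span ((Gσ.image (GB.piP p) : Finset (MvPolynomial (Fin n) (ZMod p))) :
        Set (MvPolynomial (Fin n) (ZMod p)))) Lp)
    (hLq : GB.IsOsIdeal mτ
      (Ideal.span ((Gσ.image (GB.piP q) : Finset (MvPolynomial (Fin n) (ZMod q))) :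
        Set (MvPolynomial (Fin n) (ZMod q)))) Lq)
    (hprec : GB.Prec mτ Lq Lp) :
    q ∣ GB.denF Gτ :=
  stmt18_general mσ mτ I Gσ Gτ hGσ hGτ p q hpσ hqσ Lp Lq hLp hLq hprec
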